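/- arXiv:2012.12161 — 6 statements merged into one kernel-verified Lean document; each statement's English description precedes it below -/
import Mathlib

section
/- Let E be a finite-dimensional real normed vector space, P ⊆ E a subset, F an exposed face of P, and σ ⊆ E a set of directions under which F is invariant, i.e. x + s ∈ F for all x ∈ F and s ∈ σ. Let W = span_ℝ(σ) and let π : E → E/W be the quotient map. Then the image π(F) is an exposed face of the image π(P). -/
/-- If `F` is an exposed face of `P ⊆ E` and `F` is invariant under translation by every
element of `σ`, then the image of `F` under the quotient map `E → E ⧸ span ℝ σ` is an
exposed face of the image of `P`. -/
theorem exposed_face_image_quotient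
    {E : Type*} [NormedAddCommGroup E] [NormedSpace ℝ E] [FiniteDimensional ℝ E]
    (P F : Set E) (σ : Set E)
    (hF : IsExposed ℝ P F)
    (hinv : ∀ x ∈ F, ∀ s ∈ σ, x + s ∈ F) :
    IsExposed ℝ ((Submodule.span ℝ σ).mkQ '' P) ((Submodule.span ℝ σ).mkQ '' F) := by
  intro hne
  obtain ⟨_, x, hxF, rfl⟩ := hne
  obtain ⟨l, hl⟩ := hF ⟨x, hxF⟩
  have hmem : ∀ z, z ∈ F ↔ z ∈ P ∧ ∀ y ∈ P, l y ≤ l z := by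
    intro z; rw [hl]; exact Iff.rfl
  have hker : Submodule.span ℝ σ ≤ LinearMap.ker (l : E →ₗ[ℝ] ℝ) := by
    rw [Submodule.span_le]
    intro s hs
    have h1 : x + s ∈ F := hinv x hxF s hs
    have hx' := (hmem x).1 hxF
    have h1' := (hmem _).1 h1
    have a1 : l (x + s) ≤ l x := hx'.2 _ h1'.1
    have a2 : l x ≤ l (x + s) := h1'.2 _ hx'.1
    have : l (x + s) = l x + l s := map_add l x s
    have : l s = 0 := by linarith
    simpa using this
  set W := Submodule.span ℝ σ
  haveI : IsClosed (W : Set E) := Submodule.closed_of_finiteDimensional W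
  let l' : (E ⧸ W) →L[ℝ] ℝ :=
    LinearMap.toContinuousLinearMap (W.liftQ (l : E →ₗ[ℝ] ℝ) hker)
  have hl' : ∀ z : E, l' (W.mkQ z) = l z := fun z => by simp [l', Submodule.liftQ_apply]
  refine ⟨l', Set.ext fun y => ⟨?_, ?_⟩⟩
  · rintro ⟨z, hzF, rfl⟩
    have hz := (hmem z).1 hzF
    refine ⟨⟨z, hz.1, rfl⟩, ?_⟩
    rintro _ ⟨p, hpP, rfl⟩
    rw [hl', hl']
    exact hz.2 p hpP
  · rintro ⟨⟨p, hpP, rfl⟩, hmax⟩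
    refine ⟨p, (hmem p).2 ⟨hpP, fun q hqP => ?_⟩, rfl⟩
    have := hmax (W.mkQ q) ⟨q, hqP, rfl⟩
    rwa [hl', hl'] at this
end

section
/- Let E be a finite-dimensional real normed vector space, P ⊆ E a subset, F a nonempty exposed face of P, and σ ⊆ E a set with x + s ∈ F for all x ∈ F and s ∈ σ. Let W = span_ℝ(σ) and let π : E → E/W be the quotient map. Then π⁻¹(π(F)) ∩ P = F. -/
/-- If `F` is a nonempty exposed face of `P ⊆ E` invariant under translation by every
element of `σ`, and `π : E → E ⧸ span ℝ σ` is the quotient map, then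
`π⁻¹(π(F)) ∩ P = F`. -/
theorem preimage_image_quotient_of_exposed_face
    {E : Type*} [NormedAddCommGroup E] [NormedSpace ℝ E] [FiniteDimensional ℝ E]
    (P F : Set E) (σ : Set E)
    (hne : F.Nonempty)
    (hF : IsExposed ℝ P F)
    (hinv : ∀ x ∈ F, ∀ s ∈ σ, x + s ∈ F) :
    (Submodule.span ℝ σ).mkQ ⁻¹' ((Submodule.span ℝ σ).mkQ '' F) ∩ P = F := by
  obtain ⟨l, hl⟩ := hF hne
  obtain ⟨x₀, hx₀⟩ := hne
  -- l vanishes on σ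
  have hσ : ∀ s ∈ σ, l s = 0 := by
    intro s hs
    have hx₀' := hx₀
    rw [hl] at hx₀'
    obtain ⟨hxP, hxmax⟩ := hx₀'
    have hxs : x₀ + s ∈ F := hinv x₀ hx₀ s hs
    rw [hl] at hxs
    have h1 := hxmax (x₀ + s) hxs.1
    have h2 := hxs.2 x₀ hxP
    have h3 := map_add l x₀ s
    linarith
  have hW : ∀ w ∈ Submodule.span ℝ σ, l w = 0 := by
    intro w hw
    induction hw using Submodule.span_induction with
    | mem s hs => exact hσ s hs
    | zero => simp
    | add a b _ _ ha hb => simp [ha, hb]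
    | smul c a _ ha => simp [ha]
  ext z
  constructor
  · rintro ⟨⟨x, hxF, hxz⟩, hzP⟩
    have hsub : x - z ∈ Submodule.span ℝ σ := by
      rwa [← Submodule.Quotient.eq, ← Submodule.mkQ_apply, ← Submodule.mkQ_apply]
    have hlxz : l x = l z := by
      have := hW _ hsub
      rw [map_sub] at this
      linarith
    rw [hl] at hxF ⊢
    refine ⟨hzP, fun y hy => ?_⟩
    rw [← hlxz]
    exact hxF.2 y hy
  · intro hz
    refine ⟨⟨z, hz, rfl⟩, ?_⟩
    rw [hl] at hz
    exact hz.1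
end

section
/- Let E be a finite-dimensional real vector space, σ ⊆ E a convex cone containing 0 (i.e. 0 ∈ σ, σ is closed under addition, and closed under multiplication by nonnegative scalars), and let P, P' ⊆ E be sets invariant under translation by σ, i.e. P + σ ⊆ P and P' + σ ⊆ P'. Let W = span_ℝ(σ) and π : E → E/W the quotient map. Then π(P) ∩ π(P') = π(P ∩ P'). -/
/-- If `σ` is a convex cone containing `0` and `P`, `P'` are sets invariant under
translation by `σ`, then for the quotient map `π : E → E ⧸ span ℝ σ` we have
`π(P) ∩ π(P') = π(P ∩ P')`. -/
theorem image_inter_image_quotient_of_invariant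
    {E : Type*} [AddCommGroup E] [Module ℝ E] [FiniteDimensional ℝ E]
    (σ P P' : Set E)
    (h0 : (0 : E) ∈ σ)
    (hadd : ∀ x ∈ σ, ∀ y ∈ σ, x + y ∈ σ)
    (hsmul : ∀ (c : ℝ), 0 ≤ c → ∀ x ∈ σ, c • x ∈ σ)
    (hP : ∀ x ∈ P, ∀ s ∈ σ, x + s ∈ P)
    (hP' : ∀ x ∈ P', ∀ s ∈ σ, x + s ∈ P') :
    (Submodule.span ℝ σ).mkQ '' P ∩ (Submodule.span ℝ σ).mkQ '' P'
      = (Submodule.span ℝ σ).mkQ '' (P ∩ P') := by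
  have hspan : ∀ x ∈ Submodule.span ℝ σ, ∃ a ∈ σ, ∃ b ∈ σ, x = a - b := by
    intro x hx
    induction hx using Submodule.span_induction with
    | mem x hx => exact ⟨x, hx, 0, h0, by simp⟩
    | zero => exact ⟨0, h0, 0, h0, by simp⟩
    | add x y _ _ ihx ihy =>
      obtain ⟨a, ha, b, hb, rfl⟩ := ihx
      obtain ⟨c, hc, d, hd, rfl⟩ := ihy
      exact ⟨a + c, hadd a ha c hc, b + d, hadd b hb d hd, by abel⟩
    | smul c x _ ih =>
      obtain ⟨a, ha, b, hb, rfl⟩ := ih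
      rcases le_or_gt 0 c with hc | hc
      · exact ⟨c • a, hsmul c hc a ha, c • b, hsmul c hc b hb, by
          rw [smul_sub]⟩
      · refine ⟨(-c) • b, hsmul (-c) (by linarith) b hb,
          (-c) • a, hsmul (-c) (by linarith) a ha, ?_⟩
        rw [smul_sub]; module
  apply Set.Subset.antisymm
  · rintro q ⟨⟨p, hp, rfl⟩, ⟨p', hp', hq⟩⟩
    have hdiff : p' - p ∈ Submodule.span ℝ σ := (Submodule.Quotient.eq _).mp hq
    obtain ⟨a, ha, b, hb, hab⟩ := hspan _ hdiff
    have hkey : p + a = p' + b := by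
      have : p' = p + a - b := by
        have := hab; rw [sub_eq_iff_eq_add] at this; rw [this]; abel
      rw [this]; abel
    have hmem : p + a ∈ P ∩ P' :=
      ⟨hP p hp a ha, hkey ▸ hP' p' hp' b hb⟩
    refine ⟨p + a, hmem, ?_⟩
    have : (Submodule.span ℝ σ).mkQ a = 0 := by
      simpa using (Submodule.Quotient.mk_eq_zero _).mpr (Submodule.subset_span ha)
    simp [map_add, this]
  · rintro q ⟨p, ⟨hp, hp'⟩, rfl⟩
    exact ⟨⟨p, hp, rfl⟩, ⟨p, hp', rfl⟩⟩
end

section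
/- Let E be a finite-dimensional real vector space and F ⊆ E a nonempty subset. Let rec(F) = {v ∈ E | ∀ x ∈ F, ∀ t ≥ 0, x + t•v ∈ F} be its recession cone, let W = span_ℝ(rec(F)), and let π : E → E/W be the quotient map. Then the image π(F) is a singleton if and only if the dimension of the linear span of differences of points of F (finrank of vectorSpan ℝ F) equals the dimension of W. -/
/-- Let `F ⊆ E` be nonempty, `rec(F)` its recession cone, `W = span ℝ (rec F)` and
`π : E → E ⧸ W` the quotient map. Then `π(F)` is a singleton if and only if the dimension
of the vector span of `F` equals the dimension of `W`. -/
theorem image_quotient_singleton_iff_finrank_eq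
    {E : Type*} [AddCommGroup E] [Module ℝ E] [FiniteDimensional ℝ E]
    (F : Set E) (hF : F.Nonempty) :
    (∃ y, (Submodule.span ℝ {v : E | ∀ x ∈ F, ∀ t : ℝ, 0 ≤ t → x + t • v ∈ F}).mkQ '' F = {y}) ↔
      Module.finrank ℝ (vectorSpan ℝ F) =
        Module.finrank ℝ (Submodule.span ℝ {v : E | ∀ x ∈ F, ∀ t : ℝ, 0 ≤ t → x + t • v ∈ F}) := by
  set R : Set E := {v : E | ∀ x ∈ F, ∀ t : ℝ, 0 ≤ t → x + t • v ∈ F} with hR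
  set W := Submodule.span ℝ R with hW
  obtain ⟨x₀, hx₀⟩ := hF
  have hWle : W ≤ vectorSpan ℝ F := by
    rw [hW, Submodule.span_le]
    intro v hv
    have h1 : x₀ + v ∈ F := by
      have := hv x₀ hx₀ 1 zero_le_one
      simpa using this
    have := vsub_mem_vectorSpan ℝ h1 hx₀
    simpa using this
  constructor
  · rintro ⟨y, hy⟩
    have hle : vectorSpan ℝ F ≤ W := by
      rw [vectorSpan_def, Submodule.span_le]
      rintro d ⟨a, ha, b, hb, rfl⟩
      have h1 : W.mkQ a = y := by
        have := Set.mem_image_of_mem W.mkQ ha; rw [hy] at this; exact this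
      have h2 : W.mkQ b = y := by
        have := Set.mem_image_of_mem W.mkQ hb; rw [hy] at this; exact this
      have : W.mkQ a = W.mkQ b := h1.trans h2.symm
      simpa [Submodule.Quotient.eq] using (Submodule.Quotient.eq W).mp this
    rw [le_antisymm hle hWle]
  · intro hrank
    have heq : W = vectorSpan ℝ F :=
      Submodule.eq_of_le_of_finrank_le hWle (le_of_eq hrank)
    refine ⟨W.mkQ x₀, ?_⟩
    apply Set.eq_singleton_iff_nonempty_unique_mem.mpr
    refine ⟨⟨W.mkQ x₀, Set.mem_image_of_mem _ hx₀⟩, ?_⟩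
    rintro _ ⟨a, ha, rfl⟩
    have : a - x₀ ∈ W := by
      rw [heq]
      simpa using vsub_mem_vectorSpan ℝ ha hx₀
    exact (Submodule.Quotient.eq W).mpr this
end

section
/- Let E and E' be finite-dimensional real vector spaces, π : E → E' a linear map, and P ⊆ E a nonempty H-polyhedron. Then rec(π(P)) = π(rec(P)), where rec(X) = {v | ∀ x ∈ X, ∀ t ≥ 0, x + t•v ∈ X}. -/
/-- A set is an H-polyhedron if it is the set of solutions of finitely many linear
inequalities `f i x ≥ b i`. -/
def IsHPolyhedron {E : Type*} [AddCommGroup E] [Module ℝ E] (P : Set E) : Prop :=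
  ∃ (ι : Type) (_ : Finite ι) (f : ι → E →ₗ[ℝ] ℝ) (b : ι → ℝ),
    P = {x : E | ∀ i, b i ≤ f i x}

/-- The recession cone of a set `X`: all directions `v` with `x + t • v ∈ X`
for every `x ∈ X` and `t ≥ 0`. -/
def recCone {E : Type*} [AddCommGroup E] [Module ℝ E] (X : Set E) : Set E :=
  {v : E | ∀ x ∈ X, ∀ t : ℝ, 0 ≤ t → x + t • v ∈ X}

section Aux

open Submodule Module Set

/-- Fourier–Motzkin elimination over `ℝ` for a single variable. -/
lemma fm_lemma {ι : Type} [Finite ι] (a c : ι → ℝ) :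
    (∃ s : ℝ, ∀ i, a i ≤ c i * s) ↔
      ((∀ i, c i = 0 → a i ≤ 0) ∧
        ∀ i j, 0 < c i → c j < 0 → a i / c i ≤ a j / c j) := by
  cases nonempty_fintype ι
  constructor
  · rintro ⟨s, hs⟩
    constructor
    · intro i hi
      have := hs i
      rw [hi] at this; linarith
    · intro i j hi hj
      have h1 : a i / c i ≤ s := by
        rw [div_le_iff₀ hi]; linarith [hs i]
      have h2 : s ≤ a j / c j := by
        rw [le_div_iff_of_neg hj]; linarith [hs j]
      linarith
  · rintro ⟨h0, hpair⟩
    classical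
    set Pos : Finset ι := Finset.univ.filter (fun i => 0 < c i) with hPos
    set Neg : Finset ι := Finset.univ.filter (fun i => c i < 0) with hNeg
    by_cases hp : Pos.Nonempty
    · refine ⟨Pos.sup' hp (fun i => a i / c i), fun i => ?_⟩
      rcases lt_trichotomy (c i) 0 with h | h | h
      · have : Pos.sup' hp (fun k => a k / c k) ≤ a i / c i := by
          apply Finset.sup'_le
          intro k hk
          have hk' : 0 < c k := by simpa [hPos] using hk
          exact hpair k i hk' h
        rw [mul_comm]
        exact (le_div_iff_of_neg h).1 this
      · rw [h, zero_mul]; exact h0 i h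
      · have : a i / c i ≤ Pos.sup' hp (fun k => a k / c k) :=
          Finset.le_sup' (fun k => a k / c k)
            (show i ∈ Pos from Finset.mem_filter.2 ⟨Finset.mem_univ i, h⟩)
        rw [div_le_iff₀ h] at this; linarith
    · by_cases hn : Neg.Nonempty
      · refine ⟨Neg.inf' hn (fun i => a i / c i), fun i => ?_⟩
        rcases lt_trichotomy (c i) 0 with h | h | h
        · have : Neg.inf' hn (fun k => a k / c k) ≤ a i / c i :=
            Finset.inf'_le (fun k => a k / c k)
              (show i ∈ Neg from Finset.mem_filter.2 ⟨Finset.mem_univ i, h⟩)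
          rw [mul_comm]
          exact (le_div_iff_of_neg h).1 this
        · rw [h, zero_mul]; exact h0 i h
        · exact absurd (Finset.filter_nonempty_iff.2 ⟨i, Finset.mem_univ i, h⟩) hp
      · refine ⟨0, fun i => ?_⟩
        rcases lt_trichotomy (c i) 0 with h | h | h
        · exact absurd (Finset.filter_nonempty_iff.2 ⟨i, Finset.mem_univ i, h⟩) hn
        · rw [h, zero_mul]; exact h0 i h
        · exact absurd (Finset.filter_nonempty_iff.2 ⟨i, Finset.mem_univ i, h⟩) hp

/-- The recession cone of a nonempty H-polyhedron is the homogeneous solution set. -/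
lemma recCone_polyhedron {E : Type*} [AddCommGroup E] [Module ℝ E]
    {ι : Type} (f : ι → E →ₗ[ℝ] ℝ) (b : ι → ℝ)
    (hne : {x : E | ∀ i, b i ≤ f i x}.Nonempty) :
    recCone {x : E | ∀ i, b i ≤ f i x} = {v : E | ∀ i, 0 ≤ f i v} := by
  obtain ⟨x₀, hx₀⟩ := hne
  ext v
  constructor
  · intro hv i
    by_contra hneg
    push_neg at hneg
    set t : ℝ := (f i x₀ - b i + 1) / (-(f i v)) with ht
    have htpos : 0 ≤ t := by
      apply div_nonneg
      · linarith [hx₀ i]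
      · linarith
    have hmem := hv x₀ hx₀ t htpos i
    rw [map_add, map_smul, smul_eq_mul] at hmem
    have hne0 : -(f i v) ≠ 0 := by linarith
    have hcancel : t * -(f i v) = f i x₀ - b i + 1 := by
      rw [ht, div_mul_cancel₀ _ hne0]
    nlinarith [hx₀ i]
  · intro hv x hx t ht i
    rw [map_add, map_smul, smul_eq_mul]
    have := mul_nonneg ht (hv i)
    linarith [hx i]

/-- The easy inclusion, with no hypotheses. -/
lemma image_recCone_subset {E E' : Type*} [AddCommGroup E] [Module ℝ E]
    [AddCommGroup E'] [Module ℝ E'] (π : E →ₗ[ℝ] E') (P : Set E) :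
    π '' recCone P ⊆ recCone (π '' P) := by
  rintro _ ⟨w, hw, rfl⟩ _ ⟨x, hx, rfl⟩ t ht
  exact ⟨x + t • w, hw x hx t ht, by simp [map_add, map_smul]⟩

lemma recCone_image_of_injective {E E' : Type*} [AddCommGroup E] [Module ℝ E]
    [AddCommGroup E'] [Module ℝ E'] (π : E →ₗ[ℝ] E') (hπ : Function.Injective π)
    (P : Set E) (hne : P.Nonempty) :
    recCone (π '' P) = π '' recCone P := by
  refine Subset.antisymm ?_ (image_recCone_subset π P)
  intro v hv
  obtain ⟨x₀, hx₀⟩ := hne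
  have h1 : π x₀ + (1 : ℝ) • v ∈ π '' P := hv (π x₀) ⟨x₀, hx₀, rfl⟩ 1 zero_le_one
  obtain ⟨y, _, hy⟩ := h1
  refine ⟨y - x₀, ?_, by rw [map_sub, hy, one_smul]; abel⟩
  intro x hx t ht
  have hmem : π x + t • v ∈ π '' P := hv (π x) ⟨x, hx, rfl⟩ t ht
  obtain ⟨z, hz, hzeq⟩ := hmem
  have : z = x + t • (y - x₀) := by
    apply hπ
    rw [hzeq, map_add, map_smul, map_sub, hy, add_sub_cancel_left, one_smul]
  rwa [← this]

lemma div_le_div_iff_mixed {A B p n : ℝ} (hp : 0 < p) (hn : n < 0) :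
    A / p ≤ B / n ↔ B * p ≤ A * n := by
  rw [div_le_iff₀ hp, div_mul_eq_mul_div, le_div_iff_of_neg hn]

/-- Fourier–Motzkin: the explicit image of a polyhedron under the quotient by a line. -/
lemma image_quotient_polyhedron {E : Type*} [AddCommGroup E] [Module ℝ E]
    {ι : Type} [Finite ι] (f : ι → E →ₗ[ℝ] ℝ) (e : E)
    (σ : (E ⧸ (ℝ ∙ e)) →ₗ[ℝ] E) (hσ : (ℝ ∙ e).mkQ.comp σ = LinearMap.id)
    (b : ι → ℝ) :
    (ℝ ∙ e).mkQ '' {x : E | ∀ i, b i ≤ f i x} =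
      {y : E ⧸ (ℝ ∙ e) | (∀ i, f i e = 0 → b i ≤ f i (σ y)) ∧
        ∀ i j, 0 < f i e → f j e < 0 →
          f i e * b j - f j e * b i ≤ f i e * f j (σ y) - f j e * f i (σ y)} := by
  have hσ' : ∀ y, (ℝ ∙ e).mkQ (σ y) = y := fun y => LinearMap.congr_fun hσ y
  ext y
  have key : y ∈ (ℝ ∙ e).mkQ '' {x : E | ∀ i, b i ≤ f i x} ↔
      ∃ s : ℝ, ∀ i, b i - f i (σ y) ≤ f i e * s := by
    constructor
    · rintro ⟨x, hx, rfl⟩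
      have hker : x - σ ((ℝ ∙ e).mkQ x) ∈ ℝ ∙ e := by
        have h' : (ℝ ∙ e).mkQ (x - σ ((ℝ ∙ e).mkQ x)) = 0 := by
          rw [map_sub, hσ', sub_self]
        rwa [Submodule.mkQ_apply, Submodule.Quotient.mk_eq_zero] at h'
      obtain ⟨s, hs⟩ := Submodule.mem_span_singleton.1 hker
      refine ⟨s, fun i => ?_⟩
      have hx' : x = σ ((ℝ ∙ e).mkQ x) + s • e := by rw [hs]; abel
      have := hx i
      rw [hx'] at this
      rw [map_add, map_smul, smul_eq_mul] at this
      linarith [this]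
    · rintro ⟨s, hs⟩
      refine ⟨σ y + s • e, fun i => ?_, by rw [map_add, hσ', map_smul,
        Submodule.mkQ_apply, (Submodule.Quotient.mk_eq_zero _).2
          (Submodule.mem_span_singleton_self e), smul_zero, add_zero]⟩
      rw [map_add, map_smul, smul_eq_mul]
      linarith [hs i]
  rw [key, fm_lemma (fun i => b i - f i (σ y)) (fun i => f i e)]
  constructor
  · rintro ⟨h0, hpair⟩
    refine ⟨fun i hi => by linarith [h0 i hi], fun i j hi hj => ?_⟩
    have h := hpair i j hi hj
    rw [div_le_div_iff_mixed hi hj] at h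
    nlinarith [h]
  · rintro ⟨h0, hpair⟩
    refine ⟨fun i hi => by linarith [h0 i hi], fun i j hi hj => ?_⟩
    rw [div_le_div_iff_mixed hi hj]
    nlinarith [hpair i j hi hj]

/-- The induction step data: the image of a nonempty polyhedron under quotient by a line
is a polyhedron, and its recession cone is the image of the recession cone. -/
lemma step_lemma {E : Type*} [AddCommGroup E] [Module ℝ E] [FiniteDimensional ℝ E]
    {ι : Type} [Finite ι] (f : ι → E →ₗ[ℝ] ℝ) (b : ι → ℝ) (e : E)
    (hne : {x : E | ∀ i, b i ≤ f i x}.Nonempty) :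
    IsHPolyhedron ((ℝ ∙ e).mkQ '' {x : E | ∀ i, b i ≤ f i x}) ∧
      recCone ((ℝ ∙ e).mkQ '' {x : E | ∀ i, b i ≤ f i x}) =
        (ℝ ∙ e).mkQ '' recCone {x : E | ∀ i, b i ≤ f i x} := by
  obtain ⟨σ, hσ⟩ := (ℝ ∙ e).mkQ.exists_rightInverse_of_surjective
    (LinearMap.range_eq_top.2 (ℝ ∙ e).mkQ_surjective)
  classical
  -- index type for the eliminated system
  set κ : Type := {i : ι // f i e = 0} ⊕
    {p : ι × ι // 0 < f p.1 e ∧ f p.2 e < 0} with hκ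
  have : Finite κ := by
    have : Finite {i : ι // f i e = 0} := Subtype.finite
    have : Finite {p : ι × ι // 0 < f p.1 e ∧ f p.2 e < 0} := Subtype.finite
    exact Finite.instSum
  set g : κ → (E ⧸ (ℝ ∙ e)) →ₗ[ℝ] ℝ := fun k =>
    Sum.rec (fun i => (f i.1).comp σ)
      (fun p => f p.1.1 e • (f p.1.2).comp σ - f p.1.2 e • (f p.1.1).comp σ) k with hg
  set d : (ι → ℝ) → κ → ℝ := fun c k =>
    Sum.rec (fun i => c i.1)
      (fun p => f p.1.1 e * c p.1.2 - f p.1.2 e * c p.1.1) k with hd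
  have himg : ∀ c : ι → ℝ, (ℝ ∙ e).mkQ '' {x : E | ∀ i, c i ≤ f i x} =
      {y : E ⧸ (ℝ ∙ e) | ∀ k, d c k ≤ g k y} := by
    intro c
    rw [image_quotient_polyhedron f e σ hσ c]
    ext y
    constructor
    · rintro ⟨h0, hpair⟩ k
      rcases k with ⟨i, hi⟩ | ⟨⟨i, j⟩, hij⟩
      · exact h0 i hi
      · have := hpair i j hij.1 hij.2
        simp only [hg, hd, LinearMap.sub_apply, LinearMap.smul_apply,
          LinearMap.comp_apply, smul_eq_mul]
        linarith
    · intro hk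
      refine ⟨fun i hi => hk (Sum.inl ⟨i, hi⟩), fun i j hi hj => ?_⟩
      have := hk (Sum.inr ⟨(i, j), hi, hj⟩)
      simp only [hg, hd, LinearMap.sub_apply, LinearMap.smul_apply,
        LinearMap.comp_apply, smul_eq_mul] at this
      linarith
  constructor
  · exact ⟨κ, ‹Finite κ›, g, d b, himg b⟩
  · have hne' : ((ℝ ∙ e).mkQ '' {x : E | ∀ i, b i ≤ f i x}).Nonempty :=
      hne.image _
    rw [himg b] at hne' ⊢
    rw [recCone_polyhedron g (d b) hne']
    rw [recCone_polyhedron f b hne]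
    have h0 : {x : E | ∀ i, (0 : ℝ) ≤ f i x} = {x : E | ∀ i, (fun _ => (0:ℝ)) i ≤ f i x} := rfl
    rw [h0, himg (fun _ => 0)]
    ext y
    constructor
    · intro hy k
      have := hy k
      rcases k with ⟨i, hi⟩ | ⟨⟨i, j⟩, hij⟩
      · simpa [hd] using this
      · simpa [hd] using this
    · intro hy k
      have := hy k
      rcases k with ⟨i, hi⟩ | ⟨⟨i, j⟩, hij⟩
      · simpa [hd] using this
      · simpa [hd] using this

universe u
lemma main_aux {E' : Type*} [AddCommGroup E'] [Module ℝ E'] :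
    ∀ (n : ℕ) (E : Type u) (_ : AddCommGroup E), ∀ (_ : Module ℝ E)
      (_ : FiniteDimensional ℝ E),
      Module.finrank ℝ E ≤ n → ∀ (π : E →ₗ[ℝ] E') (P : Set E),
      IsHPolyhedron P → P.Nonempty →
      recCone (π '' P) = π '' recCone P := by
  intro n
  induction n with
  | zero =>
      intro E _ _ _ hrank π P _ hne
      have : Subsingleton E := by
        rw [← Module.finrank_zero_iff (R := ℝ)]
        omega
      exact recCone_image_of_injective π (fun a b _ => Subsingleton.elim a b) P hne
  | succ m ih =>
      intro E _ _ _ hrank π P hP hne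
      by_cases hker : LinearMap.ker π = ⊥
      · exact recCone_image_of_injective π (LinearMap.ker_eq_bot.1 hker) P hne
      · obtain ⟨e, he, he0⟩ := Submodule.exists_mem_ne_zero_of_ne_bot hker
        set p : Submodule ℝ E := ℝ ∙ e with hp
        have hle : p ≤ LinearMap.ker π := by
          rw [hp, Submodule.span_singleton_le_iff_mem]; exact he
        set π' : (E ⧸ p) →ₗ[ℝ] E' := p.liftQ π hle with hπ'
        have hfact : π = π'.comp p.mkQ := by
          rw [hπ', Submodule.liftQ_mkQ]
        have hrankq : Module.finrank ℝ (E ⧸ p) ≤ m := by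
          have h1 := Submodule.finrank_quotient_add_finrank p
          have h2 : Module.finrank ℝ p = 1 := finrank_span_singleton he0
          omega
        obtain ⟨ι, _, f, b, hPeq⟩ := hP
        subst hPeq
        obtain ⟨hpoly, hrec⟩ := step_lemma f b e hne
        have himg : π '' {x : E | ∀ i, b i ≤ f i x} =
            π' '' (p.mkQ '' {x : E | ∀ i, b i ≤ f i x}) := by
          rw [hfact, ← Set.image_comp]; rfl
        rw [himg, ih (E ⧸ p) inferInstance inferInstance inferInstance hrankq π' _ hpoly (hne.image _), hrec,
          ← Set.image_comp]
        rw [hfact]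
        rfl

end Aux

/-- For a nonempty H-polyhedron `P` and a linear map `π`,
`rec(π(P)) = π(rec(P))`. -/
theorem recCone_image
    {E E' : Type*} [AddCommGroup E] [Module ℝ E] [FiniteDimensional ℝ E]
    [AddCommGroup E'] [Module ℝ E'] [FiniteDimensional ℝ E']
    (π : E →ₗ[ℝ] E') (P : Set E) (hP : IsHPolyhedron P) (hne : P.Nonempty) :
    recCone (π '' P) = π '' recCone P := by
  exact main_aux (Module.finrank ℝ E) E inferInstance inferInstance inferInstance le_rfl π P hP hne
end

section
/- Let E be a finite-dimensional real normed vector space, P ⊆ E a nonempty H-polyhedron, and let σ be a nonempty exposed face of the recession cone rec(P). Then there exists a nonempty exposed face F of P with rec(F) = σ. -/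
/-
Write `P = {x | ∀ i, b i ≤ f i x}`, so that `rec P = {v | ∀ i, 0 ≤ f i v}`. Since `rec P` is a cone,
a functional `l` exposing `σ` is `≤ 0` on `rec P`, and `σ = {v ∈ rec P | 0 ≤ l v}`. A linear
functional that is `≤ 0` on `rec P` attains its maximum on `P`, at `x₀` say; the face
`F = {x ∈ P | l x₀ ≤ l x}` exposed by `l` is cut out by the constraints of `P` and `l x₀ ≤ l`,
so `rec F = rec P ∩ {0 ≤ l} = σ`.

The attainment is proved by induction on the set of constraints forced to be tight: from a point
`x₀` of a face, a point `y` with `l x₀ < l y` leaves through a constraint along the ray from `x₀`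
through `y`, and the exit point lies in a smaller face and has a larger value of `l`.
-/

section RecessionCone

variable {E : Type*} [AddCommGroup E] [Module ℝ E]

lemma smul_mem_recCone {X : Set E} {v : E} (hv : v ∈ recCone X) {s : ℝ} (hs : 0 ≤ s) :
    s • v ∈ recCone X := fun x hx t ht => by
  simpa only [smul_smul] using hv x hx (t * s) (mul_nonneg ht hs)

lemma nonneg_of_mem_recCone {X : Set E} (hX : X.Nonempty) {g : E →ₗ[ℝ] ℝ} {c : ℝ}
    (hXg : ∀ x ∈ X, c ≤ g x) {v : E} (hv : v ∈ recCone X) : 0 ≤ g v := by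
  obtain ⟨x, hx⟩ := hX
  by_contra! hgv
  have hpos : 0 < -g v := neg_pos.mpr hgv
  set t := (g x - c + 1) / -g v
  have ht : t * -g v = g x - c + 1 := div_mul_cancel₀ _ hpos.ne'
  have hxt := hXg _ (hv x hx t (div_nonneg (by linarith [hXg x hx]) hpos.le))
  simp only [map_add, map_smul, smul_eq_mul] at hxt
  linarith

lemma mem_recCone_setOf_le {ι : Type*} {f : ι → E →ₗ[ℝ] ℝ} {b : ι → ℝ} {v : E}
    (hv : ∀ i, 0 ≤ f i v) : v ∈ recCone {x | ∀ i, b i ≤ f i x} := fun x hx t ht i => by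
  simpa only [map_add, map_smul, smul_eq_mul] using
    le_add_of_le_of_nonneg (hx i) (mul_nonneg ht (hv i))

end RecessionCone

lemma IsExposed.exists_nonpos_eq_setOf_nonneg {E : Type*} [AddCommGroup E] [TopologicalSpace E]
    [Module ℝ E] {C σ : Set E} (hC : ∀ v ∈ C, ∀ s : ℝ, 0 ≤ s → s • v ∈ C)
    (hσ : IsExposed ℝ C σ) (hne : σ.Nonempty) :
    ∃ l : StrongDual ℝ E, (∀ v ∈ C, l v ≤ 0) ∧ σ = {v ∈ C | 0 ≤ l v} := by
  obtain ⟨l, rfl⟩ := hσ hne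
  obtain ⟨v₀, hv₀C, hv₀max⟩ := hne
  -- comparing `v₀` with `0 • v₀` and `2 • v₀` shows that the maximum of `l` on the cone is `0`
  have h0 := hv₀max _ (hC v₀ hv₀C 0 le_rfl)
  have h2 := hv₀max _ (hC v₀ hv₀C 2 zero_le_two)
  simp only [map_smul, smul_eq_mul] at h0 h2
  have hnonpos : ∀ v ∈ C, l v ≤ 0 := fun v hv => by linarith [hv₀max v hv]
  refine ⟨l, hnonpos, ?_⟩
  ext v
  exact and_congr_right fun hv =>
    ⟨fun h => by simpa using h _ (hC v₀ hv₀C 0 le_rfl), fun h w hw => (hnonpos w hw).trans h⟩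

section LinearProgramming

variable {E ι : Type*} [AddCommGroup E] [Module ℝ E] {f : ι → E →ₗ[ℝ] ℝ} {b : ι → ℝ}

variable (f b) in
def tightFace (T : Set ι) : Set E :=
  {x | (∀ i, b i ≤ f i x) ∧ ∀ i ∈ T, f i x = b i}

lemma tightFace_empty : tightFace f b ∅ = {x | ∀ i, b i ≤ f i x} := by
  simp [tightFace]

lemma tightFace_anti {S T : Set ι} (h : S ⊆ T) : tightFace f b T ⊆ tightFace f b S :=
  fun _ hx => ⟨hx.1, fun i hi => hx.2 i (h hi)⟩

lemma exists_exit_point [Finite ι] {x d : E} (hx : ∀ i, b i ≤ f i x)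
    (hxd : ∀ i, b i ≤ f i (x + d)) (hd : ∃ j, f j d < 0) :
    ∃ t : ℝ, 1 ≤ t ∧ ∃ j, f j d < 0 ∧ (∀ i, b i ≤ f i (x + t • d)) ∧ f j (x + t • d) = b j := by
  obtain ⟨j, hj, hjmin⟩ := Set.exists_min_image {j | f j d < 0} (fun j => (f j x - b j) / -f j d)
    (Set.toFinite _) hd
  have hj' : 0 < -f j d := neg_pos.mpr hj
  simp only [map_add, map_smul, smul_eq_mul] at hxd ⊢
  set t := (f j x - b j) / -f j d
  have ht : 1 ≤ t := (one_le_div hj').mpr (by linarith [hxd j])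
  have htj : t * -f j d = f j x - b j := div_mul_cancel₀ _ hj'.ne'
  refine ⟨t, ht, j, hj, fun i => ?_, by linarith⟩
  rcases le_or_gt 0 (f i d) with hi | hi
  · nlinarith [hx i]
  · linarith [(le_div_iff₀ (neg_pos.mpr hi)).mp (hjmin i hi)]

lemma exists_mem_tightFace_insert_le [Finite ι] {l : E →ₗ[ℝ] ℝ}
    (hl : ∀ v, (∀ i, 0 ≤ f i v) → l v ≤ 0) {T : Set ι} {x y : E} (hx : x ∈ tightFace f b T)
    (hy : y ∈ tightFace f b T) (hlt : l x < l y) :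
    ∃ j ∉ T, ∃ z ∈ tightFace f b (insert j T), l y ≤ l z := by
  have hd : ∃ j, f j (y - x) < 0 := by
    by_contra! h
    linarith [hl _ h, map_sub l y x]
  obtain ⟨t, ht, j, hj, hz, hzj⟩ := exists_exit_point hx.1 (by simpa using hy.1) hd
  have hflat : ∀ i ∈ T, f i (y - x) = 0 := fun i hi => by
    rw [map_sub, hx.2 i hi, hy.2 i hi, sub_self]
  refine ⟨j, fun hjT => by linarith [hflat j hjT], x + t • (y - x), ⟨hz, ?_⟩, ?_⟩
  · rintro i (rfl | hi)
    · exact hzj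
    · simp [hflat i hi, hx.2 i hi]
  · simp only [map_add, map_smul, map_sub, smul_eq_mul]
    nlinarith

lemma exists_forall_le_on_tightFace [Finite ι] {l : E →ₗ[ℝ] ℝ}
    (hl : ∀ v, (∀ i, 0 ≤ f i v) → l v ≤ 0) (T : Set ι) (hne : (tightFace f b T).Nonempty) :
    ∃ x ∈ tightFace f b T, ∀ y ∈ tightFace f b T, l y ≤ l x := by
  induction T using WellFoundedGT.induction with
  | _ T ih =>
  obtain ⟨x₀, hx₀⟩ := hne
  have hface : ∀ j, ∃ m ∈ tightFace f b T,
      j ∉ T → ∀ y ∈ tightFace f b (insert j T), l y ≤ l m := by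
    intro j
    by_cases h : j ∉ T ∧ (tightFace f b (insert j T)).Nonempty
    · obtain ⟨m, hm, hmax⟩ := ih _ (Set.ssubset_insert h.1) h.2
      exact ⟨m, tightFace_anti (Set.subset_insert _ _) hm, fun _ => hmax⟩
    · exact ⟨x₀, hx₀, fun hj y hy => absurd ⟨hj, y, hy⟩ h⟩
  choose m hmT hmmax using hface
  obtain ⟨xm, hxm, hxmmax⟩ := Set.exists_max_image (insert x₀ (Set.range m)) l
    ((Set.finite_range m).insert x₀) (Set.insert_nonempty _ _)
  refine ⟨xm, ?_, fun y hy => ?_⟩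
  · rcases hxm with rfl | ⟨j, rfl⟩
    exacts [hx₀, hmT j]
  rcases le_or_gt (l y) (l x₀) with hle | hlt
  · exact hle.trans (hxmmax _ (Set.mem_insert _ _))
  obtain ⟨j, hj, z, hz, hyz⟩ := exists_mem_tightFace_insert_le hl hx₀ hy hlt
  exact hyz.trans ((hmmax j hj z hz).trans (hxmmax _ (Set.mem_insert_of_mem _ ⟨j, rfl⟩)))

theorem exists_forall_le_of_nonpos_on_recession [Finite ι] {l : E →ₗ[ℝ] ℝ}
    (hne : {x | ∀ i, b i ≤ f i x}.Nonempty) (hl : ∀ v, (∀ i, 0 ≤ f i v) → l v ≤ 0) :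
    ∃ x ∈ {x | ∀ i, b i ≤ f i x}, ∀ y ∈ {x | ∀ i, b i ≤ f i x}, l y ≤ l x := by
  rw [← tightFace_empty] at hne ⊢
  exact exists_forall_le_on_tightFace hl ∅ hne

end LinearProgramming

theorem exists_exposed_face_with_recCone_general
    {E : Type*} [NormedAddCommGroup E] [NormedSpace ℝ E]
    (P : Set E) (hP : P.Nonempty) (hpoly : IsHPolyhedron P)
    (σ : Set E) (hσne : σ.Nonempty) (hσ : IsExposed ℝ (recCone P) σ) :
    ∃ F : Set E, F.Nonempty ∧ IsExposed ℝ P F ∧ recCone F = σ := by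
  obtain ⟨ι, hι, f, b, rfl⟩ := hpoly
  obtain ⟨l, hl, rfl⟩ :=
    hσ.exists_nonpos_eq_setOf_nonneg (fun _ hv _ hs => smul_mem_recCone hv hs) hσne
  obtain ⟨x₀, hx₀, hx₀max⟩ := exists_forall_le_of_nonpos_on_recession (l := l.toLinearMap) hP
    fun v hv => hl v (mem_recCone_setOf_le hv)
  set P := {x : E | ∀ i, b i ≤ f i x}
  have hF : {x ∈ P | ∀ y ∈ P, l y ≤ l x}.Nonempty := ⟨x₀, hx₀, hx₀max⟩
  refine ⟨_, hF, fun _ => ⟨l, rfl⟩, Set.Subset.antisymm (fun v hv => ⟨?_, ?_⟩) ?_⟩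
  · exact mem_recCone_setOf_le fun i => nonneg_of_mem_recCone hF (fun x hx => hx.1 i) hv
  · exact nonneg_of_mem_recCone (g := l.toLinearMap) hF (fun x hx => hx.2 x₀ hx₀) hv
  · rintro v ⟨hv, hlv⟩ x ⟨hx, hxmax⟩ t ht
    refine ⟨hv x hx t ht, fun y hy => ?_⟩
    simpa using le_add_of_le_of_nonneg (hxmax y hy) (mul_nonneg ht hlv)

/-- Every nonempty exposed face `σ` of the recession cone of a nonempty H-polyhedron
`P` is the recession cone of some nonempty exposed face `F` of `P`. -/
theorem exists_exposed_face_with_recCone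
    {E : Type*} [NormedAddCommGroup E] [NormedSpace ℝ E] [FiniteDimensional ℝ E]
    (P : Set E) (hP : P.Nonempty) (hpoly : IsHPolyhedron P)
    (σ : Set E) (hσne : σ.Nonempty) (hσ : IsExposed ℝ (recCone P) σ) :
    ∃ F : Set E, F.Nonempty ∧ IsExposed ℝ P F ∧ recCone F = σ :=
  exists_exposed_face_with_recCone_general P hP hpoly σ hσne hσ
end
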